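/- arXiv:1202.3410 — 3 statements merged into one kernel-verified Lean document; each statement's English description precedes it below -/
import Mathlib

section
/- Let D(η) = e^{η J+} e^{μ J3} e^{-η̄ J-} with μ = log(1 + |η|²), acting in the (N+1)-dimensional su(2) representation. Then its matrix elements in the mode basis are λ_{k,m} = ⟨k| D(η) |m⟩ = (-1)^m (ρ^{m+k} e^{iδ(k-m)} / (1+ρ²)^{N/2}) C(N,k)^{1/2} C(N,m)^{1/2} K_m(k; p, N), where η = ρe^{iδ} and p = ρ²/(1+ρ²). -/
/-- The su(2) spin-N/2 raising operator on `ℂ^{N+1}`. -/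
noncomputable def Jp (N : ℕ) : Matrix (Fin (N + 1)) (Fin (N + 1)) ℂ :=
  Matrix.of fun i j : Fin (N + 1) =>
    if (i : ℕ) = (j : ℕ) + 1 then (Real.sqrt (((j : ℕ) + 1) * (N - (j : ℕ))) : ℂ) else 0

/-- The su(2) spin-N/2 lowering operator on `ℂ^{N+1}`. -/
noncomputable def Jm (N : ℕ) : Matrix (Fin (N + 1)) (Fin (N + 1)) ℂ :=
  Matrix.of fun i j : Fin (N + 1) =>
    if (i : ℕ) + 1 = (j : ℕ) then (Real.sqrt ((j : ℕ) * (N - (j : ℕ) + 1)) : ℂ) else 0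

/-- The su(2) spin-N/2 diagonal generator on `ℂ^{N+1}`. -/
noncomputable def J3 (N : ℕ) : Matrix (Fin (N + 1)) (Fin (N + 1)) ℂ :=
  Matrix.diagonal fun k : Fin (N + 1) => ((k : ℕ) : ℂ) - (N : ℂ) / 2


open Nat in
/-- The Krawtchouk polynomial. -/
noncomputable def kraw (p : ℝ) (N n : ℕ) (x : ℝ) : ℝ :=
  ∑ k ∈ Finset.range (n + 1),
    ((ascPochhammer ℝ k).eval (-(n : ℝ)) * (ascPochhammer ℝ k).eval (-x)) /
      ((ascPochhammer ℝ k).eval (-(N : ℝ)) * (k ! : ℝ)) * (1 / p) ^ k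

/-!
Conjugation by `S = diag(√C(N,n))` turns `J+` into the shift `|n⟩ ↦ (n+1)|n+1⟩`, whose
exponential is the Pascal matrix `(a^(i-j) C(i,j))`; moreover `J- = J+ᵀ`. Hence
`⟨k|D(η)|m⟩ = √(C(N,k) C(N,m)) ∑_r C(k,r) C(m,r) / C(N,r) · η^(k-r) (-η̄)^(m-r) e^(μ(r-N/2))`,
and `C(k,r) C(m,r) / C(N,r) = (-k)_r (-m)_r / ((-N)_r r!)` is the `r`-th coefficient of the
Krawtchouk polynomial.
-/

open Finset

theorem NormedSpace.exp_eq_sum_range_of_pow_eq_zero (𝕂 : Type*) {𝔸 : Type*} [Field 𝕂] [CharZero 𝕂]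
    [Ring 𝔸] [Algebra 𝕂 𝔸] [TopologicalSpace 𝔸] [IsTopologicalRing 𝔸] {x : 𝔸} {q : ℕ}
    (h : x ^ q = 0) : NormedSpace.exp x = ∑ n ∈ range q, (n.factorial⁻¹ : 𝕂) • x ^ n := by
  rw [NormedSpace.exp_eq_tsum 𝕂]
  refine tsum_eq_sum fun n hn => ?_
  rw [← Nat.sub_add_cancel (not_lt.1 (mem_range.not.1 hn)), pow_add, h, mul_zero, smul_zero]

theorem Nat.prod_range_add_succ_eq_factorial_mul_choose (j q : ℕ) :
    ∏ t ∈ range q, (j + t + 1) = q.factorial * (j + q).choose q := by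
  rw [← Nat.ascFactorial_eq_factorial_mul_choose, Nat.ascFactorial_eq_prod_range]
  exact prod_congr rfl fun t _ => by ring

namespace Matrix

variable {n : ℕ} {R : Type*}

def subdiagonal [Zero R] (w : ℕ → R) : Matrix (Fin n) (Fin n) R :=
  of fun i j => if (i : ℕ) = j + 1 then w i else 0

theorem subdiagonal_pow_apply [CommSemiring R] (w : ℕ → R) (q : ℕ) (i j : Fin n) :
    (subdiagonal w ^ q) i j = if (i : ℕ) = j + q then ∏ t ∈ range q, w (j + t + 1) else 0 := by
  induction q generalizing i with
  | zero => simp [one_apply, Fin.ext_iff]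
  | succ q ih =>
    rw [pow_succ', mul_apply]
    rcases i with ⟨_ | i, hi⟩
    · simp [subdiagonal]
    · rw [sum_eq_single ⟨i, by omega⟩
        (fun l _ hl => by simp [subdiagonal, Fin.ext_iff] at hl ⊢; omega) (by simp), ih]
      simp only [subdiagonal, of_apply, if_true, prod_range_succ]
      split_ifs with h
      · rw [h, mul_comm]
      all_goals first | omega | rw [mul_zero]

variable {𝕂 : Type*} [Field 𝕂] [CharZero 𝕂] [TopologicalSpace 𝕂] [IsTopologicalRing 𝕂]

theorem exp_smul_subdiagonal_natCast (a : 𝕂) (i j : Fin n) :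
    NormedSpace.exp (a • subdiagonal (fun k => (k : 𝕂))) i j =
      a ^ ((i : ℕ) - j) * (i : ℕ).choose j := by
  have hnil : (a • subdiagonal (n := n) (fun k => (k : 𝕂))) ^ n = 0 := by
    ext i j
    rw [smul_pow, smul_apply, subdiagonal_pow_apply, if_neg (by omega), smul_zero, zero_apply]
  rw [NormedSpace.exp_eq_sum_range_of_pow_eq_zero 𝕂 hnil, sum_apply]
  simp only [smul_pow, smul_apply, subdiagonal_pow_apply]
  rcases le_or_gt (j : ℕ) i with hji | hij
  · obtain ⟨q, hq⟩ := Nat.exists_eq_add_of_le hji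
    rw [sum_eq_single q (fun r _ hr => by rw [if_neg (by omega), smul_zero, smul_zero])
      (fun hq' => absurd (mem_range.2 (by omega)) hq'), if_pos hq]
    rw [hq, Nat.add_sub_cancel_left, ← Nat.cast_prod,
      Nat.prod_range_add_succ_eq_factorial_mul_choose, Nat.choose_symm_add, Nat.cast_mul,
      smul_eq_mul, smul_eq_mul, mul_left_comm,
      inv_mul_cancel_left₀ (Nat.cast_ne_zero.2 q.factorial_ne_zero)]
  · rw [Nat.choose_eq_zero_of_lt hij, Nat.cast_zero, mul_zero]
    exact sum_eq_zero fun r _ => by rw [if_neg (by omega), smul_zero, smul_zero]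

end Matrix

open Matrix

theorem Real.sqrt_succ_mul_sub_mul_sqrt_choose (N j : ℕ) (h : j < N) :
    √((j + 1) * (N - j)) * √(N.choose j) = √(N.choose (j + 1)) * (j + 1) := by
  have hchoose := congrArg (Nat.cast : ℕ → ℝ) (Nat.choose_succ_right_eq N j)
  push_cast [Nat.cast_sub h.le] at hchoose
  have hsq : √(N.choose (j + 1)) * (j + 1) = √(N.choose (j + 1) * (j + 1) ^ 2) := by
    rw [Real.sqrt_mul (by positivity), Real.sqrt_sq (by positivity)]
  rw [hsq, ← Real.sqrt_mul (by nlinarith [(by exact_mod_cast h : (j : ℝ) < N)])]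
  congr 1
  linear_combination (-(j + 1) : ℝ) * hchoose

theorem sqrt_choose_ne_zero {N : ℕ} (i : Fin (N + 1)) : (√(N.choose i) : ℂ) ≠ 0 :=
  Complex.ofReal_ne_zero.2 <| Real.sqrt_ne_zero'.2 <| Nat.cast_pos.2 <| Nat.choose_pos <| by omega

noncomputable def sqrtChooseDiagonal (N : ℕ) : (Matrix (Fin (N + 1)) (Fin (N + 1)) ℂ)ˣ where
  val := diagonal fun i => (√(N.choose i) : ℂ)
  inv := diagonal fun i => (√(N.choose i) : ℂ)⁻¹
  val_inv := by
    rw [diagonal_mul_diagonal, ← diagonal_one]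
    exact congrArg _ (funext fun i => mul_inv_cancel₀ (sqrt_choose_ne_zero i))
  inv_val := by
    rw [diagonal_mul_diagonal, ← diagonal_one]
    exact congrArg _ (funext fun i => inv_mul_cancel₀ (sqrt_choose_ne_zero i))

theorem Jp_eq_conj (N : ℕ) :
    Jp N = (sqrtChooseDiagonal N).val * subdiagonal (fun k => (k : ℂ)) *
      (sqrtChooseDiagonal N)⁻¹.val := by
  ext i j
  simp only [sqrtChooseDiagonal, Units.inv_mk, diagonal_mul, mul_diagonal, Jp, subdiagonal,
    of_apply]
  split_ifs with h
  · rw [eq_mul_inv_iff_mul_eq₀ (sqrt_choose_ne_zero j), h]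
    exact_mod_cast Real.sqrt_succ_mul_sub_mul_sqrt_choose N j (by omega)
  · rw [mul_zero, zero_mul]

theorem Jm_eq_transpose (N : ℕ) : Jm N = (Jp N)ᵀ := by
  ext i j
  simp only [Jm, Jp, transpose_apply, of_apply]
  split_ifs with h h'
  · rw [← h]
    push_cast
    ring_nf
  all_goals first | omega | rfl

theorem exp_smul_Jp_apply (N : ℕ) (a : ℂ) (i j : Fin (N + 1)) :
    NormedSpace.exp (a • Jp N) i j =
      √(N.choose i) * (a ^ ((i : ℕ) - j) * (i : ℕ).choose j) / √(N.choose j) := by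
  rw [Jp_eq_conj, ← smul_mul_assoc, ← mul_smul_comm, Matrix.exp_units_conj]
  simp only [sqrtChooseDiagonal, Units.inv_mk, diagonal_mul, mul_diagonal,
    exp_smul_subdiagonal_natCast, div_eq_mul_inv]

theorem exp_smul_J3 (N : ℕ) (c : ℂ) :
    NormedSpace.exp (c • J3 N) =
      diagonal fun k : Fin (N + 1) => Complex.exp (c * ((k : ℕ) - N / 2)) := by
  rw [J3, ← diagonal_smul, exp_diagonal, Pi.exp_def]
  simp only [Pi.smul_apply, smul_eq_mul, Complex.exp_eq_exp_ℂ]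

theorem exp_smul_Jp_mul_diagonal_mul_exp_smul_Jm_apply (N : ℕ) (a b : ℂ) (d : ℕ → ℂ)
    (k m : Fin (N + 1)) :
    (NormedSpace.exp (a • Jp N) * diagonal (fun r : Fin (N + 1) => d r) *
        NormedSpace.exp (b • Jm N)) k m =
      √(N.choose k) * √(N.choose m) * ∑ r ∈ range (N + 1),
        ((k : ℕ).choose r * (m : ℕ).choose r / N.choose r : ℂ) * a ^ ((k : ℕ) - r) *
          b ^ ((m : ℕ) - r) * d r := by
  rw [Jm_eq_transpose, ← transpose_smul, Matrix.exp_transpose, mul_apply, mul_sum,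
    ← Fin.sum_univ_eq_sum_range]
  refine sum_congr rfl fun r _ => ?_
  have hr := sqrt_choose_ne_zero r
  have hsq : (√(N.choose r) : ℂ) ^ 2 = N.choose r := by
    rw [← Complex.ofReal_pow, Real.sq_sqrt (Nat.cast_nonneg _), Complex.ofReal_natCast]
  simp only [mul_diagonal, transpose_apply, exp_smul_Jp_apply]
  rw [← hsq]
  field_simp

theorem ascPochhammer_eval_neg_natCast {R : Type*} [Ring R] (n r : ℕ) :
    (ascPochhammer R r).eval (-(n : R)) = (-1) ^ r * (r.factorial * n.choose r : ℕ) := by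
  rw [ascPochhammer_eval_neg_eq_descPochhammer, descPochhammer_eval_eq_descFactorial,
    Nat.descFactorial_eq_factorial_mul_choose]

theorem kraw_eq_sum_choose (p : ℝ) {N m : ℕ} (hm : m ≤ N) (k : ℕ) :
    kraw p N m k = ∑ r ∈ range (N + 1),
      (-1) ^ r * (k.choose r * m.choose r / N.choose r) * (1 / p) ^ r := by
  rw [kraw, sum_subset (range_subset_range.2 (by omega : m + 1 ≤ N + 1)) fun r _ hr => by
    rw [ascPochhammer_eval_neg_natCast, Nat.choose_eq_zero_of_lt (by simpa using hr)]; simp]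
  refine sum_congr rfl fun r hr => ?_
  have hN : (N.choose r : ℝ) ≠ 0 := Nat.cast_ne_zero.2 (Nat.choose_pos (by simpa using hr)).ne'
  have hfact : (r.factorial : ℝ) ≠ 0 := Nat.cast_ne_zero.2 r.factorial_ne_zero
  simp only [ascPochhammer_eval_neg_natCast, Nat.cast_mul]
  field_simp

theorem Complex.exp_log_mul_natCast_sub_half {x : ℝ} (hx : 0 < x) (r N : ℕ) :
    Complex.exp (Real.log x * ((r : ℂ) - N / 2)) = ((x ^ r / √(x ^ N) : ℝ) : ℂ) := by
  have hrpow : x ^ r / √(x ^ N) = x ^ ((r : ℝ) - N / 2) := by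
    rw [Real.rpow_sub hx, Real.rpow_natCast, Real.sqrt_eq_rpow, ← Real.rpow_natCast_mul hx.le,
      mul_one_div]
  rw [hrpow, Real.rpow_def_of_pos hx, Complex.ofReal_exp]
  push_cast
  rfl

theorem coherent_weight {ρ : ℝ} (hρ : ρ ≠ 0) (δ : ℝ) {k m r : ℕ} (hk : r ≤ k) (hm : r ≤ m) :
    ((ρ : ℂ) * Complex.exp (Complex.I * δ)) ^ (k - r) *
        (-(starRingEnd ℂ) ((ρ : ℂ) * Complex.exp (Complex.I * δ))) ^ (m - r) *
          (1 + (ρ : ℂ) ^ 2) ^ r =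
      (-1) ^ m * (ρ : ℂ) ^ (m + k) * Complex.exp (Complex.I * δ * ((k : ℂ) - m)) *
        ((-1) ^ r * (1 / ((ρ : ℂ) ^ 2 / (1 + (ρ : ℂ) ^ 2))) ^ r) := by
  obtain ⟨k, rfl⟩ := Nat.exists_eq_add_of_le hk
  obtain ⟨m, rfl⟩ := Nat.exists_eq_add_of_le hm
  have hconj : (starRingEnd ℂ) ((ρ : ℂ) * Complex.exp (Complex.I * δ)) =
      ρ * Complex.exp (-(Complex.I * δ)) := by
    rw [map_mul, Complex.conj_ofReal, ← Complex.exp_conj, map_mul, Complex.conj_I,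
      Complex.conj_ofReal, neg_mul]
  have hphase : Complex.exp (Complex.I * δ * (((r + k : ℕ) : ℂ) - (r + m : ℕ))) =
      Complex.exp (Complex.I * δ) ^ k * Complex.exp (-(Complex.I * δ)) ^ m := by
    rw [← Complex.exp_nat_mul, ← Complex.exp_nat_mul, ← Complex.exp_add]
    push_cast
    ring_nf
  have hsign : ((-1 : ℂ)) ^ (r + m) * (-1) ^ r = (-1) ^ m := by
    rw [pow_add, mul_right_comm, ← mul_pow, neg_one_mul, neg_neg, one_pow, one_mul]
  have hρ' : (ρ : ℂ) ≠ 0 := Complex.ofReal_ne_zero.2 hρ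
  have hρ2 : (1 + (ρ : ℂ) ^ 2) ≠ 0 := by exact_mod_cast (by positivity : (1 + ρ ^ 2) ≠ 0)
  rw [Nat.add_sub_cancel_left, Nat.add_sub_cancel_left, hconj, hphase, one_div_div, div_pow]
  field_simp
  linear_combination -((ρ : ℂ) ^ (r + m + (r + k)) * Complex.exp (Complex.I * δ) ^ k *
    Complex.exp (-(Complex.I * δ)) ^ m) * hsign

/-- Matrix elements of the coherent-state operator
`D(η) = e^{η J+} e^{μ J3} e^{-η̄ J-}`, `μ = log(1+|η|²)`, in terms of Krawtchouk
polynomials, with `η = ρ e^{iδ}` and `p = ρ²/(1+ρ²)`. -/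
theorem coherent_matrix_elements (N : ℕ) (ρ δ : ℝ) (hρ : 0 < ρ)
    (k m : Fin (N + 1)) :
    (NormedSpace.exp (((ρ : ℂ) * Complex.exp (Complex.I * δ)) • Jp N) *
        NormedSpace.exp ((Real.log (1 + ρ ^ 2) : ℂ) • J3 N) *
        NormedSpace.exp
          ((-(starRingEnd ℂ) ((ρ : ℂ) * Complex.exp (Complex.I * δ))) • Jm N)) k m =
      (-1) ^ (m : ℕ) * ((ρ ^ ((m : ℕ) + (k : ℕ)) : ℝ) : ℂ) *
          Complex.exp (Complex.I * δ * (((k : ℕ) : ℂ) - ((m : ℕ) : ℂ))) /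
          (Real.sqrt ((1 + ρ ^ 2) ^ N) : ℂ) *
          (Real.sqrt (N.choose k) : ℂ) * (Real.sqrt (N.choose m) : ℂ) *
          ((kraw (ρ ^ 2 / (1 + ρ ^ 2)) N m ((k : ℕ) : ℝ) : ℝ) : ℂ) := by
  rw [exp_smul_J3, exp_smul_Jp_mul_diagonal_mul_exp_smul_Jm_apply N _ _
      (fun r => Complex.exp (Real.log (1 + ρ ^ 2) * ((r : ℂ) - N / 2))),
    kraw_eq_sum_choose _ (by omega)]
  simp only [Complex.exp_log_mul_natCast_sub_half (by positivity : 0 < 1 + ρ ^ 2)]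
  push_cast
  rw [mul_sum, mul_sum]
  refine sum_congr rfl fun r _ => ?_
  rcases lt_or_ge (k : ℕ) r with hk | hk
  · simp [Nat.choose_eq_zero_of_lt hk]
  rcases lt_or_ge (m : ℕ) r with hm | hm
  · simp [Nat.choose_eq_zero_of_lt hm]
  linear_combination (√(N.choose k) * √(N.choose m) * ((k : ℕ).choose r * (m : ℕ).choose r /
    N.choose r) / √((1 + ρ ^ 2) ^ N) : ℂ) * coherent_weight hρ.ne' δ hk hm
end

section
/- The matrix elements λ_{k,m} = ⟨k| e^{ηJ+} e^{μJ3} e^{-η̄J-} |m⟩ (with μ = log(1+|η|²)) satisfy the unitarity relation Σ_{k=0}^{N} λ_{k,m} λ*_{k,n} = δ_{mn} for all 0 ≤ m, n ≤ N; i.e., D(η) is a unitary operator on C^{N+1}. -/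
open NormedSpace

section SkewAdjointFlow

variable {𝔸 : Type*} [NormedRing 𝔸] [NormedAlgebra ℝ 𝔸] [StarRing 𝔸] [StarModule ℝ 𝔸]
  [ContinuousStar 𝔸]

theorem star_mul_self_eq_one_of_hasDerivAt {U K : ℝ → 𝔸} (hU₀ : U 0 = 1)
    (hU : ∀ t, HasDerivAt U (K t * U t) t) (hK : ∀ t, star (K t) = -K t) (t : ℝ) :
    star (U t) * U t = 1 := by
  have hderiv (s : ℝ) : HasDerivAt (fun s => star (U s) * U s) 0 s := by
    refine ((hU s).star.mul (hU s)).congr_deriv ?_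
    rw [star_mul, hK, mul_neg, neg_mul, mul_assoc, neg_add_cancel]
  simpa [hU₀] using is_const_of_deriv_eq_zero (fun s => (hderiv s).differentiableAt)
    (fun s => (hderiv s).deriv) t 0

end SkewAdjointFlow

section ComplexBanachAlgebra

variable {𝔸 : Type*} [NormedRing 𝔸] [NormedAlgebra ℂ 𝔸] [CompleteSpace 𝔸]

theorem exp_smul_mul_exp_smul_neg (X : 𝔸) (t : ℂ) : exp (t • X) * exp (t • -X) = 1 := by
  let : NormedAlgebra ℚ 𝔸 := .restrictScalars ℚ ℂ 𝔸
  rw [← exp_add_of_commute ((Commute.refl X).neg_right.smul_left t |>.smul_right t),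
    smul_neg, add_neg_cancel, exp_zero]

theorem exp_smul_mul_eq_mul_exp_smul {X : 𝔸} {F : ℂ → 𝔸}
    (hF : ∀ t, HasDerivAt F (X * F t - F t * X) t) (t : ℂ) :
    exp (t • X) * F 0 = F t * exp (t • X) := by
  have hconst (s : ℂ) :
      HasDerivAt (fun s : ℂ => exp (s • -X) * F s * exp (s • X)) 0 s := by
    have hcomm (Y : 𝔸) : exp (s • -X) * (X * Y) = X * (exp (s • -X) * Y) := by
      rw [← mul_assoc, ← mul_assoc, ((Commute.refl X).neg_right.smul_right s).exp_right.eq]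
    refine (((hasDerivAt_exp_smul_const' (-X) s).mul (hF s)).mul
      (hasDerivAt_exp_smul_const' X s)).congr_deriv ?_
    simp only [Pi.mul_apply, neg_mul, mul_sub, add_mul, sub_mul, mul_assoc, hcomm]
    abel
  have heq := is_const_of_deriv_eq_zero (fun s => (hconst s).differentiableAt)
    (fun s => (hconst s).deriv) t 0
  simp only [zero_smul, exp_zero, one_mul, mul_one] at heq
  rw [← heq, ← mul_assoc, ← mul_assoc, exp_smul_mul_exp_smul_neg, one_mul]

section Commutators

variable {e f h : 𝔸}

theorem exp_smul_mul_of_commutator_eq_self (hhe : h * e - e * h = e) (a : ℂ) :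
    exp (a • e) * h = (h - a • e) * exp (a • e) := by
  have hF (t : ℂ) :
      HasDerivAt (fun t : ℂ => h - t • e) (e * (h - t • e) - (h - t • e) * e) t := by
    refine ((hasDerivAt_id t).smul_const e).const_sub h |>.congr_deriv ?_
    rw [mul_sub, sub_mul, mul_smul_comm, smul_mul_assoc, sub_sub_sub_cancel_right, ← neg_sub,
      hhe, one_smul]
  convert exp_smul_mul_eq_mul_exp_smul hF a using 2
  simp

theorem exp_smul_mul_of_commutator_eq_smul (hhe : h * e - e * h = e)
    (hef : e * f - f * e = (2 : ℂ) • h) (a : ℂ) :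
    exp (a • e) * f = (f + (2 * a) • h - a ^ 2 • e) * exp (a • e) := by
  have hF (t : ℂ) : HasDerivAt (fun t : ℂ => f + (2 * t) • h - t ^ 2 • e)
      (e * (f + (2 * t) • h - t ^ 2 • e) - (f + (2 * t) • h - t ^ 2 • e) * e) t := by
    have hlin := ((hasDerivAt_id t).const_mul 2).smul_const h
    have hsq := (hasDerivAt_pow 2 t).smul_const e
    refine ((hlin.const_add f).sub hsq).congr_deriv ?_
    simp only [mul_sub, mul_add, sub_mul, add_mul, mul_smul_comm, smul_mul_assoc]
    linear_combination (norm := module) -hef + (2 * t) • hhe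
  convert exp_smul_mul_eq_mul_exp_smul hF a using 2
  simp

theorem exp_smul_mul_of_commutator_eq_neg (hhf : h * f - f * h = -f) (z : ℂ) :
    exp (z • h) * f = Complex.exp (-z) • (f * exp (z • h)) := by
  have hF (t : ℂ) : HasDerivAt (fun t : ℂ => Complex.exp (-t) • f)
      (h * (Complex.exp (-t) • f) - Complex.exp (-t) • f * h) t := by
    refine ((hasDerivAt_id t).neg.cexp.smul_const f).congr_deriv ?_
    rw [mul_smul_comm, smul_mul_assoc, ← smul_sub, hhf]
    simp
  convert exp_smul_mul_eq_mul_exp_smul hF z using 2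
  · simp
  · rw [smul_mul_assoc]

end Commutators

theorem hasDerivAt_exp_ofReal_smul (x : 𝔸) (t : ℝ) :
    HasDerivAt (fun u : ℝ => exp ((u : ℂ) • x)) (x * exp ((t : ℂ) • x)) t := by
  simpa only [Complex.coe_smul] using hasDerivAt_exp_smul_const' (𝕂 := ℝ) x t

noncomputable def coherentPath (e f h : 𝔸) (η : ℂ) (t : ℝ) : 𝔸 :=
  exp ((t : ℂ) • (η • e)) * exp ((Real.log (1 + t ^ 2 * ‖η‖ ^ 2) : ℂ) • h) *
    exp ((t : ℂ) • (-(starRingEnd ℂ) η • f))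

theorem hasDerivAt_coherentPath {e f h : 𝔸} (hhe : h * e - e * h = e)
    (hef : e * f - f * e = (2 : ℂ) • h) (hhf : h * f - f * h = -f) (η : ℂ) (t : ℝ) :
    HasDerivAt (coherentPath e f h η)
      (((1 + t ^ 2 * ‖η‖ ^ 2)⁻¹ • (η • e - (starRingEnd ℂ) η • f)) *
        coherentPath e f h η t) t := by
  have hs : 0 < 1 + t ^ 2 * ‖η‖ ^ 2 := by positivity
  have hA := hasDerivAt_exp_ofReal_smul (η • e) t
  have hC := hasDerivAt_exp_ofReal_smul (-(starRingEnd ℂ) η • f) t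
  have hμ := (((hasDerivAt_pow 2 t).mul_const (‖η‖ ^ 2)).const_add 1).log hs.ne'
  have hB := (hasDerivAt_exp_ofReal_smul h _).scomp t hμ
  refine ((hA.mul hB).mul hC).congr_deriv ?_
  set A := exp ((t : ℂ) • (η • e)) with hA_def
  set B := exp ((Real.log (1 + t ^ 2 * ‖η‖ ^ 2) : ℂ) • h)
  set C := exp ((t : ℂ) • (-(starRingEnd ℂ) η • f))
  have hAh (Z : 𝔸) : A * (h * Z) = h * (A * Z) - ((t : ℂ) * η) • (e * (A * Z)) := by
    rw [hA_def, smul_smul, ← mul_assoc, exp_smul_mul_of_commutator_eq_self hhe]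
    simp only [sub_mul, smul_mul_assoc, mul_assoc]
  have hAf (Z : 𝔸) : A * (f * Z) = f * (A * Z) + (2 * ((t : ℂ) * η)) • (h * (A * Z)) -
      ((t : ℂ) * η) ^ 2 • (e * (A * Z)) := by
    rw [hA_def, smul_smul, ← mul_assoc, exp_smul_mul_of_commutator_eq_smul hhe hef]
    simp only [sub_mul, add_mul, smul_mul_assoc, mul_assoc]
  have hBf (Z : 𝔸) :
      B * (f * Z) = ((1 + t ^ 2 * ‖η‖ ^ 2 : ℝ) : ℂ)⁻¹ • (f * (B * Z)) := by
    rw [← mul_assoc, exp_smul_mul_of_commutator_eq_neg hhf, ← Complex.ofReal_neg,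
      ← Complex.ofReal_exp, Real.exp_neg, Real.exp_log hs, Complex.ofReal_inv, smul_mul_assoc,
      mul_assoc]
  show (((η • e) * A) * B + A * (_ • (h * B))) * C + A * B * ((-(starRingEnd ℂ) η • f) * C) = _
  rw [← Complex.coe_smul, ← Complex.coe_smul, coherentPath]
  simp only [smul_mul_assoc, mul_smul_comm, mul_assoc, add_mul, sub_mul, hAh, hBf, hAf,
    smul_sub, smul_add]
  have hconj : (starRingEnd ℂ) η * η = (‖η‖ : ℂ) ^ 2 := Complex.conj_mul' η
  have hs' : 1 + (t : ℂ) ^ 2 * (‖η‖ : ℂ) ^ 2 ≠ 0 := by exact_mod_cast hs.ne'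
  push_cast
  match_scalars
  · field_simp
    linear_combination (t : ℂ) ^ 2 * η * hconj
  · field_simp
    linear_combination -2 * (t : ℂ) * hconj
  · ring

variable [StarRing 𝔸] [StarModule ℂ 𝔸] [ContinuousStar 𝔸]

theorem star_coherentPath_mul_self {e f h : 𝔸} (hhe : h * e - e * h = e)
    (hef : e * f - f * e = (2 : ℂ) • h) (hstar_e : star e = f) (hstar_h : star h = h) (η : ℂ)
    (t : ℝ) :
    star (coherentPath e f h η t) * coherentPath e f h η t = 1 := by
  have hstar_f : star f = e := by rw [← hstar_e, star_star]
  have hhf : h * f - f * h = -f := by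
    have := congrArg star hhe
    rw [star_sub, star_mul, star_mul, hstar_h, hstar_e] at this
    rw [← neg_sub, this]
  refine star_mul_self_eq_one_of_hasDerivAt ?_ (hasDerivAt_coherentPath hhe hef hhf η) ?_ t
  · simp [coherentPath]
  · intro t
    rw [star_smul, star_trivial, star_sub, star_smul, star_smul, hstar_e, hstar_f, Complex.star_def,
      Complex.conj_conj, ← smul_neg, neg_sub]

end ComplexBanachAlgebra

section Matrices

variable {N : ℕ}

theorem star_Jp : star (Jp N) = Jm N := by
  ext i j
  simp only [Matrix.star_apply, Jp, Jm, Matrix.of_apply]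
  split_ifs with h1 h2 <;> try omega
  · rw [Complex.star_def, Complex.conj_ofReal]
    congr 2
    push_cast [h1]
    ring
  · simp

theorem commutator_J3_Jp : J3 N * Jp N - Jp N * J3 N = Jp N := by
  ext i j
  simp only [J3, Matrix.diagonal_mul, Matrix.mul_diagonal, Matrix.sub_apply, Jp, Matrix.of_apply]
  split_ifs with h
  · rw [h]; push_cast; ring
  · simp

theorem Jp_mul_Jm :
    Jp N * Jm N = Matrix.diagonal fun i : Fin (N + 1) => ((i : ℕ) : ℂ) * (N - i + 1) := by
  ext ⟨_ | p, hp⟩ j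
  · simp [Matrix.mul_apply, Jp, Matrix.diagonal_apply]
  · rw [Matrix.mul_apply, Finset.sum_eq_single ⟨p, by omega⟩ (fun k _ hk => ?_) (by simp)]
    · simp only [Jp, Jm, Matrix.of_apply, Matrix.diagonal_apply, Fin.ext_iff, if_pos]
      split_ifs with h
      · have hpN : (p : ℝ) ≤ N := by exact_mod_cast (by omega : p ≤ N)
        rw [← h]
        push_cast
        rw [show (N : ℝ) - (p + 1) + 1 = N - p by ring,
          ← Complex.ofReal_mul, Real.mul_self_sqrt (mul_nonneg (by positivity) (by linarith))]
        push_cast; ring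
      · simp
    · rw [Jp, Matrix.of_apply, if_neg fun h => hk (Fin.ext (by simpa using h.symm)), zero_mul]

theorem Jm_mul_Jp :
    Jm N * Jp N = Matrix.diagonal fun i : Fin (N + 1) => ((i : ℕ) + 1 : ℂ) * (N - i) := by
  ext i j
  rw [Matrix.mul_apply, Matrix.diagonal_apply]
  by_cases hi : (i : ℕ) < N
  · rw [Finset.sum_eq_single ⟨i + 1, by omega⟩ (fun k _ hk => ?_) (by simp)]
    · simp only [Jp, Jm, Matrix.of_apply, Fin.ext_iff, if_pos, add_left_inj]
      split_ifs with h
      · have hiN : ((i : ℕ) : ℝ) ≤ N := by exact_mod_cast hi.le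
        rw [← h]
        push_cast
        rw [show (N : ℝ) - (i + 1) + 1 = N - i by ring,
          ← Complex.ofReal_mul, Real.mul_self_sqrt (mul_nonneg (by positivity) (by linarith))]
        push_cast; ring
      · simp
    · rw [Jm, Matrix.of_apply, if_neg fun h => hk (Fin.ext h.symm), zero_mul]
  · have hiN : (i : ℕ) = N := by omega
    rw [Finset.sum_eq_zero fun k _ => by rw [Jm, Matrix.of_apply, if_neg (by omega), zero_mul]]
    simp only [hiN, sub_self, mul_zero, ite_self]

theorem commutator_Jp_Jm : Jp N * Jm N - Jm N * Jp N = (2 : ℂ) • J3 N := by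
  rw [Jp_mul_Jm, Jm_mul_Jp, J3, Matrix.diagonal_sub, ← Matrix.diagonal_smul]
  congr 1; ext i; simp only [Pi.smul_apply, smul_eq_mul]; ring

theorem star_J3 : star (J3 N) = J3 N := by
  rw [J3, Matrix.star_eq_conjTranspose, Matrix.diagonal_conjTranspose]
  congr 1; ext i; simp

end Matrices

/-- The coherent-state operator `D(η) = e^{η J+} e^{μ J3} e^{-η̄ J-}` with
`μ = log(1+|η|²)` is unitary: its matrix elements satisfy
`Σ_k λ_{k,m} λ*_{k,n} = δ_{mn}`. -/
theorem coherent_operator_unitary (N : ℕ) (η : ℂ) (m n : Fin (N + 1)) :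
    (∑ k : Fin (N + 1),
        (NormedSpace.exp (η • Jp N) *
            NormedSpace.exp ((Real.log (1 + ‖η‖ ^ 2) : ℂ) • J3 N) *
            NormedSpace.exp ((-(starRingEnd ℂ) η) • Jm N)) k m *
          (starRingEnd ℂ)
            ((NormedSpace.exp (η • Jp N) *
                NormedSpace.exp ((Real.log (1 + ‖η‖ ^ 2) : ℂ) • J3 N) *
                NormedSpace.exp ((-(starRingEnd ℂ) η) • Jm N)) k n)) =
      if m = n then 1 else 0 := by
  set D := exp (η • Jp N) * exp ((Real.log (1 + ‖η‖ ^ 2) : ℂ) • J3 N) *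
    exp ((-(starRingEnd ℂ) η) • Jm N)
  have hD : star D * D = 1 := by
    open scoped Matrix.Norms.Frobenius in
    have h := star_coherentPath_mul_self (commutator_J3_Jp (N := N)) commutator_Jp_Jm star_Jp
      star_J3 η 1
    simp only [coherentPath, Complex.ofReal_one, one_smul, one_pow, one_mul] at h
    exact h
  have hnm := congrFun (congrFun hD n) m
  rw [Matrix.mul_apply, Matrix.one_apply] at hnm
  simpa [Matrix.star_apply, mul_comm, eq_comm] using hnm
end

section
/- For the su(2) coherent state |η⟩, the squeezing parameter Z₃² = N(ΔJ3)²/(⟨J1⟩² + ⟨J2⟩²) equals exactly 1 for every η ≠ 0; hence pure su(2) coherent states are never squeezed along the J3 axis. -/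
/-- The normalized su(2) coherent state `|η⟩`, `η = ρ e^{iδ}`. -/
noncomputable def coh (N : ℕ) (ρ δ : ℝ) : Fin (N + 1) → ℂ := fun k =>
  ((Real.sqrt (N.choose k) * ρ ^ (k : ℕ) / Real.sqrt ((1 + ρ ^ 2) ^ N) : ℝ) : ℂ) *
    Complex.exp (Complex.I * δ * (k : ℕ))

/-- The expectation value `⟨v|A|v⟩`. -/
noncomputable def expVal (N : ℕ) (v : Fin (N + 1) → ℂ)
    (A : Matrix (Fin (N + 1)) (Fin (N + 1)) ℂ) : ℂ :=
  dotProduct (star v) (A.mulVec v)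

/-!
In the coherent state the populations |⟨k|η⟩|² form the binomial distribution
Bin(N, q), q = ρ²/(1+ρ²), i.e. the Bernstein basis polynomials evaluated at q. Hence
⟨J3⟩ + N/2 and (ΔJ3)² are the binomial mean Nq and variance Nq(1-q). The raising operator
only links neighbouring levels, and the amplitudes combine to ⟨J+⟩ = e^{-iδ} ρ N (1-q);
since J- = J+†, ⟨J1⟩² + ⟨J2⟩² = ⟨J+⟩⟨J-⟩ = ρ²N²(1-q)². Finally q = ρ²(1-q), so
N (ΔJ3)² = N²q(1-q) equals ρ²N²(1-q)².
-/

open Finset Polynomial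
open scoped Matrix

namespace bernsteinPolynomial

variable {R : Type*} [CommRing R] (n : ℕ) (x : R)

theorem sum_eval : ∑ ν ∈ range (n + 1), (bernsteinPolynomial R n ν).eval x = 1 := by
  simpa [eval_finsetSum] using congrArg (eval x) (bernsteinPolynomial.sum R n)

theorem sum_mul_eval : ∑ ν ∈ range (n + 1), ν * (bernsteinPolynomial R n ν).eval x = n * x := by
  simpa [eval_finsetSum] using congrArg (eval x) (bernsteinPolynomial.sum_smul R n)

theorem sum_sub_mul_eval :
    ∑ ν ∈ range (n + 1), (n - ν) * (bernsteinPolynomial R n ν).eval x = n * (1 - x) := by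
  simp only [sub_mul, sum_sub_distrib, ← mul_sum, sum_eval, sum_mul_eval]
  ring

theorem sum_sq_sub_mul_eval (c : R) :
    ∑ ν ∈ range (n + 1), (ν - c) ^ 2 * (bernsteinPolynomial R n ν).eval x =
      n * x * (1 - x) + (n * x - c) ^ 2 := by
  have hvar := congrArg (eval x) (bernsteinPolynomial.variance R n)
  simp only [eval_finsetSum, eval_mul, eval_pow, eval_sub, eval_X, eval_natCast,
    eval_one, nsmul_eq_mul] at hvar
  calc ∑ ν ∈ range (n + 1), (ν - c) ^ 2 * (bernsteinPolynomial R n ν).eval x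
      = ∑ ν ∈ range (n + 1), ((n * x - ν) ^ 2 * (bernsteinPolynomial R n ν).eval x +
          2 * (n * x - c) * (ν * (bernsteinPolynomial R n ν).eval x) -
          (n * x - c) * (n * x + c) * (bernsteinPolynomial R n ν).eval x) :=
        sum_congr rfl fun ν _ => by ring
    _ = n * x * (1 - x) + (n * x - c) ^ 2 := by
        rw [sum_sub_distrib, sum_add_distrib, ← mul_sum, ← mul_sum, hvar, sum_eval, sum_mul_eval]
        ring

end bernsteinPolynomial

section expVal

variable {N : ℕ} (v : Fin (N + 1) → ℂ)

theorem expVal_add (A B : Matrix (Fin (N + 1)) (Fin (N + 1)) ℂ) :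
    expVal N v (A + B) = expVal N v A + expVal N v B := by
  rw [expVal, Matrix.add_mulVec, dotProduct_add]; rfl

theorem expVal_sub (A B : Matrix (Fin (N + 1)) (Fin (N + 1)) ℂ) :
    expVal N v (A - B) = expVal N v A - expVal N v B := by
  rw [expVal, Matrix.sub_mulVec, dotProduct_sub]; rfl

theorem expVal_smul (z : ℂ) (A : Matrix (Fin (N + 1)) (Fin (N + 1)) ℂ) :
    expVal N v (z • A) = z * expVal N v A := by
  rw [expVal, Matrix.smul_mulVec, dotProduct_smul, smul_eq_mul]; rfl

theorem expVal_conjTranspose (A : Matrix (Fin (N + 1)) (Fin (N + 1)) ℂ) :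
    expVal N v Aᴴ = star (expVal N v A) := by
  rw [expVal, expVal, Matrix.mulVec_conjTranspose, Matrix.star_dotProduct_star,
    Matrix.dotProduct_mulVec]

theorem expVal_diagonal (d : Fin (N + 1) → ℂ) :
    expVal N v (Matrix.diagonal d) = ∑ k, d k * (star (v k) * v k) := by
  simp only [expVal, dotProduct, Matrix.mulVec_diagonal, Pi.star_apply]
  exact sum_congr rfl fun k _ => by ring

theorem expVal_Jp :
    expVal N v (Jp N) = ∑ j : Fin N,
      (√((j + 1) * (N - j)) : ℂ) * (star (v j.succ) * v j.castSucc) := by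
  have row_zero (j : Fin (N + 1)) : Jp N 0 j = 0 := by simp [Jp]
  have row_succ (i : Fin N) (j : Fin (N + 1)) (hj : j ≠ i.castSucc) : Jp N i.succ j = 0 := by
    rw [Jp, Matrix.of_apply, if_neg]
    simpa [Fin.ext_iff, eq_comm] using hj
  simp only [expVal, dotProduct, Matrix.mulVec, Pi.star_apply]
  rw [Fin.sum_univ_succ]
  simp only [row_zero, zero_mul, sum_const_zero, mul_zero, zero_add]
  refine sum_congr rfl fun i _ => ?_
  rw [Fintype.sum_eq_single i.castSucc fun j hj => by rw [row_succ i j hj, zero_mul]]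
  simp [Jp, mul_left_comm]

theorem expVal_J1_sq_add_expVal_J2_sq :
    expVal N v ((1 / 2 : ℂ) • (Jp N + Jm N)) ^ 2 +
        expVal N v ((1 / (2 * Complex.I)) • (Jp N - Jm N)) ^ 2 =
      expVal N v (Jp N) * expVal N v (Jm N) := by
  rw [expVal_smul, expVal_smul, expVal_add, expVal_sub]
  field_simp
  linear_combination (expVal N v (Jp N) - expVal N v (Jm N)) ^ 2 * Complex.I_sq

end expVal

theorem Jm_eq_conjTranspose_Jp (N : ℕ) : Jm N = (Jp N)ᴴ := by
  ext i j
  simp only [Jm, Jp, Matrix.conjTranspose_apply, Matrix.of_apply]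
  by_cases h : (j : ℕ) = i + 1
  · rw [if_pos h.symm, if_pos h, Complex.star_def, Complex.conj_ofReal, h]
    congr 2
    push_cast
    ring
  · rw [if_neg (Ne.symm h), if_neg h, star_zero]

theorem J3_eq_diagonal (N : ℕ) :
    J3 N = Matrix.diagonal fun k : Fin (N + 1) => (((k : ℕ) - N / 2 : ℝ) : ℂ) := by
  rw [J3]
  push_cast
  rfl

theorem J3_sq_eq_diagonal (N : ℕ) :
    J3 N ^ 2 = Matrix.diagonal fun k : Fin (N + 1) => ((((k : ℕ) - N / 2) ^ 2 : ℝ) : ℂ) := by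
  rw [sq, J3_eq_diagonal, Matrix.diagonal_mul_diagonal]
  push_cast
  simp only [sq]

theorem sqrt_choose_succ_mul_sqrt_choose_mul_sqrt {n j : ℕ} (hj : j ≤ n) :
    √(n.choose (j + 1)) * √(n.choose j) * √(((j : ℝ) + 1) * (n - j)) = n.choose j * (n - j) := by
  have hchoose : (n.choose (j + 1) : ℝ) * (j + 1) = n.choose j * (n - j) := by
    rw [← Nat.cast_sub hj]
    exact_mod_cast Nat.choose_succ_right_eq n j
  have hnj : (0 : ℝ) ≤ n - j := sub_nonneg.mpr (by exact_mod_cast hj)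
  rw [← Real.sqrt_mul (by positivity), ← Real.sqrt_mul (by positivity),
    show (n.choose (j + 1) : ℝ) * n.choose j * ((j + 1) * (n - j)) = (n.choose j * (n - j)) ^ 2 by
      linear_combination (n.choose j * (n - j) : ℝ) * hchoose,
    Real.sqrt_sq (by positivity)]

theorem bernsteinPolynomial_eval_div_one_add_sq {n k : ℕ} (hk : k ≤ n) (ρ : ℝ) :
    (bernsteinPolynomial ℝ n k).eval (ρ ^ 2 / (1 + ρ ^ 2)) =
      n.choose k * ρ ^ (2 * k) / (1 + ρ ^ 2) ^ n := by
  obtain ⟨m, rfl⟩ := Nat.exists_eq_add_of_le hk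
  have hs : (1 + ρ ^ 2) ≠ 0 := by positivity
  simp only [bernsteinPolynomial, eval_mul, eval_pow, eval_sub, eval_one, eval_X, eval_natCast,
    Nat.add_sub_cancel_left, one_sub_div hs, add_sub_cancel_right, div_pow, pow_add]
  field_simp
  ring

section coherent

variable (N : ℕ) (ρ δ : ℝ)

theorem star_coh_mul_coh (i j : Fin (N + 1)) :
    star (coh N ρ δ i) * coh N ρ δ j =
      ((√(N.choose i) * √(N.choose j) * ρ ^ ((i : ℕ) + j) / (1 + ρ ^ 2) ^ N : ℝ) : ℂ) *
        Complex.exp (Complex.I * δ * ((j : ℕ) - (i : ℕ) : ℂ)) := by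
  have hS : √((1 + ρ ^ 2) ^ N) * √((1 + ρ ^ 2) ^ N) = (1 + ρ ^ 2) ^ N :=
    Real.mul_self_sqrt (by positivity)
  have hphase (a b : ℕ) : star (Complex.exp (Complex.I * δ * a)) * Complex.exp (Complex.I * δ * b)
      = Complex.exp (Complex.I * δ * (b - a : ℂ)) := by
    rw [Complex.star_def, ← Complex.exp_conj, ← Complex.exp_add]
    congr 1
    simp only [map_mul, Complex.conj_I, Complex.conj_ofReal, map_natCast]
    ring
  simp only [coh, star_mul', Complex.star_def, Complex.conj_ofReal]
  rw [mul_mul_mul_comm, ← Complex.star_def, hphase, ← Complex.ofReal_mul]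
  congr 2
  rw [div_mul_div_comm, hS, pow_add]
  ring

theorem star_coh_mul_self (k : Fin (N + 1)) :
    star (coh N ρ δ k) * coh N ρ δ k = (bernsteinPolynomial ℝ N k).eval (ρ ^ 2 / (1 + ρ ^ 2)) := by
  rw [star_coh_mul_coh, sub_self, mul_zero, Complex.exp_zero, mul_one,
    bernsteinPolynomial_eval_div_one_add_sq (Nat.lt_succ_iff.mp k.is_lt),
    Real.mul_self_sqrt (Nat.cast_nonneg _), ← two_mul]

theorem sqrt_mul_star_coh_succ_mul_coh (j : Fin N) :
    (√(((j : ℕ) + 1) * (N - (j : ℕ))) : ℂ) * (star (coh N ρ δ j.succ) * coh N ρ δ j.castSucc) =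
      ((ρ * (N - j) * (bernsteinPolynomial ℝ N j).eval (ρ ^ 2 / (1 + ρ ^ 2)) : ℝ) : ℂ) *
        Complex.exp (-(Complex.I * δ)) := by
  rw [star_coh_mul_coh, bernsteinPolynomial_eval_div_one_add_sq j.is_lt.le, ← mul_assoc,
    ← Complex.ofReal_mul]
  simp only [Fin.val_succ, Fin.val_castSucc]
  congr 2
  · calc √(((j : ℕ) + 1) * (N - (j : ℕ))) *
          (√(N.choose ((j : ℕ) + 1)) * √(N.choose j) * ρ ^ ((j : ℕ) + 1 + j) / (1 + ρ ^ 2) ^ N)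
        = √(N.choose ((j : ℕ) + 1)) * √(N.choose j) * √(((j : ℕ) + 1) * (N - (j : ℕ))) *
            (ρ ^ ((j : ℕ) + j + 1) / (1 + ρ ^ 2) ^ N) := by ring
      _ = _ := by rw [sqrt_choose_succ_mul_sqrt_choose_mul_sqrt j.is_lt.le]; ring
  · push_cast
    ring

theorem expVal_coh_diagonal (f : ℕ → ℝ) :
    expVal N (coh N ρ δ) (Matrix.diagonal fun k => (f k : ℂ)) =
      ((∑ k ∈ range (N + 1), f k * (bernsteinPolynomial ℝ N k).eval (ρ ^ 2 / (1 + ρ ^ 2)) : ℝ) :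
        ℂ) := by
  rw [expVal_diagonal]
  simp only [star_coh_mul_self, ← Complex.ofReal_mul, ← Complex.ofReal_sum]
  exact congrArg _ (Fin.sum_univ_eq_sum_range (fun k => f k * (bernsteinPolynomial ℝ N k).eval _) _)

theorem expVal_coh_J3 :
    expVal N (coh N ρ δ) (J3 N) = ((N * (ρ ^ 2 / (1 + ρ ^ 2)) - N / 2 : ℝ) : ℂ) := by
  rw [J3_eq_diagonal, expVal_coh_diagonal N ρ δ fun k => k - N / 2]
  simp only [sub_mul, sum_sub_distrib, ← mul_sum, bernsteinPolynomial.sum_mul_eval,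
    bernsteinPolynomial.sum_eval, mul_one]

theorem expVal_coh_J3_sq :
    expVal N (coh N ρ δ) (J3 N ^ 2) =
      ((N * (ρ ^ 2 / (1 + ρ ^ 2)) * (1 - ρ ^ 2 / (1 + ρ ^ 2)) +
        (N * (ρ ^ 2 / (1 + ρ ^ 2)) - N / 2) ^ 2 : ℝ) : ℂ) := by
  rw [J3_sq_eq_diagonal, expVal_coh_diagonal N ρ δ fun k => (k - N / 2) ^ 2,
    bernsteinPolynomial.sum_sq_sub_mul_eval]

theorem expVal_coh_Jp :
    expVal N (coh N ρ δ) (Jp N) =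
      ((ρ * (N * (1 - ρ ^ 2 / (1 + ρ ^ 2))) : ℝ) : ℂ) * Complex.exp (-(Complex.I * δ)) := by
  rw [expVal_Jp]
  simp only [sqrt_mul_star_coh_succ_mul_coh]
  rw [← sum_mul, ← bernsteinPolynomial.sum_sub_mul_eval, sum_range_succ, sub_self, zero_mul,
    add_zero, mul_sum,
    Fin.sum_univ_eq_sum_range (fun j => ((ρ * (N - j) *
      (bernsteinPolynomial ℝ N j).eval (ρ ^ 2 / (1 + ρ ^ 2)) : ℝ) : ℂ))]
  push_cast
  simp only [mul_assoc]

theorem expVal_coh_Jm :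
    expVal N (coh N ρ δ) (Jm N) =
      ((ρ * (N * (1 - ρ ^ 2 / (1 + ρ ^ 2))) : ℝ) : ℂ) * Complex.exp (Complex.I * δ) := by
  rw [Jm_eq_conjTranspose_Jp, expVal_conjTranspose, expVal_coh_Jp, star_mul', Complex.star_def,
    Complex.conj_ofReal, ← Complex.exp_conj]
  simp [Complex.conj_ofReal]

end coherent

/-- The squeezing parameter `Z₃² = N (ΔJ3)² / (⟨J1⟩² + ⟨J2⟩²)` equals `1` in every
su(2) coherent state with `η ≠ 0`: coherent states are never squeezed along `J3`. -/
theorem coherent_not_squeezed (N : ℕ) (hN : 0 < N) (ρ δ : ℝ) (hρ : 0 < ρ) :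
    (N : ℂ) *
        (expVal N (coh N ρ δ) ((J3 N) ^ 2) - (expVal N (coh N ρ δ) (J3 N)) ^ 2) /
        ((expVal N (coh N ρ δ) ((1 / 2 : ℂ) • (Jp N + Jm N))) ^ 2 +
          (expVal N (coh N ρ δ) ((1 / (2 * Complex.I)) • (Jp N - Jm N))) ^ 2) = 1 := by
  have hphase : Complex.exp (-(Complex.I * δ)) * Complex.exp (Complex.I * δ) = 1 := by
    rw [← Complex.exp_add, neg_add_cancel, Complex.exp_zero]
  rw [expVal_J1_sq_add_expVal_J2_sq, expVal_coh_Jp, expVal_coh_Jm, expVal_coh_J3_sq,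
    expVal_coh_J3, mul_mul_mul_comm, hphase, mul_one, ← Complex.ofReal_natCast,
    ← Complex.ofReal_pow, ← Complex.ofReal_sub, ← Complex.ofReal_mul, ← Complex.ofReal_mul,
    ← Complex.ofReal_div, Complex.ofReal_eq_one]
  have hN' : (N : ℝ) ≠ 0 := by positivity
  have hρ' : ρ ≠ 0 := hρ.ne'
  field_simp
  ring
end
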